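/- Let $N>p>1$, $\beta>p$, $\chi = N/(N-p)$, and let $(x_k)_{k\ge 0}$ be a sequence of nonnegative reals satisfying $x_{k+1} \le (C\chi^k\beta)^{\sigma/(\chi^k\beta)} \max\{x_k, x_k^{1 - p/(\chi^k\beta)}\}$ for all $k$, where $C\beta \ge 1$ and $\sigma > 0$. Then there exist constants $\tilde C > 0$ (depending on $C, \sigma, \beta, \chi$) and $\theta_0 \in (0,1]$ (depending on $p,\beta,N$) such that $x_k \le \tilde C \max\{x_0^{\theta_0}, x_0\}$ for all $k \ge 0$. -/
import Mathlib

private lemma rpow_le_max (t a s : ℝ) (ht : 0 ≤ t) (ha : 0 < a) (has : a ≤ s) (hs : s ≤ 1) :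
    t ^ s ≤ max (t ^ a) t := by
  rcases eq_or_lt_of_le ht with h0 | h0
  · rw [← h0, Real.zero_rpow (by linarith : s ≠ 0)]
    exact le_max_right _ _
  · rcases le_or_gt t 1 with h1 | h1
    · exact le_max_of_le_left (Real.rpow_le_rpow_of_exponent_ge h0 h1 has)
    · have h := Real.rpow_le_rpow_of_exponent_le h1.le hs
      rw [Real.rpow_one] at h
      exact le_max_of_le_right h

private lemma exp_le_one_sub (t m : ℝ) (ht : 0 ≤ t) (htm : t ≤ m) (hm : m < 1) :
    Real.exp (-(t / (1 - m))) ≤ 1 - t := by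
  have h1m : 0 < 1 - m := by linarith
  set y := t / (1 - m) with hy
  have hy0 : 0 ≤ y := div_nonneg ht h1m.le
  have hexp : 1 + y ≤ Real.exp y := by linarith [Real.add_one_le_exp y]
  have h1y : 0 < 1 + y := by linarith
  have hstep : Real.exp (-y) ≤ (1 + y)⁻¹ := by
    rw [Real.exp_neg]
    exact inv_anti₀ h1y hexp
  refine hstep.trans ?_
  rw [inv_eq_one_div, div_le_iff₀ h1y]
  have hyval : y * (1 - m) = t := by
    rw [hy]; field_simp
  nlinarith [mul_nonneg hy0 (sub_nonneg.2 htm)]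

/-- Abstract Moser iteration. If a sequence of nonnegative reals satisfies
`x_{k+1} ≤ (C χ^k β)^{σ/(χ^k β)} max{x_k, x_k^{1 - p/(χ^k β)}}` with `χ = N/(N-p)`,
`Cβ ≥ 1`, `σ > 0`, then `x_k ≤ C' max{x_0^{θ₀}, x_0}` for some `C' > 0` and `θ₀ ∈ (0,1]`. -/
theorem statement1 (N p β C σ : ℝ) (hp : 1 < p) (hN : p < N) (hβ : p < β)
    (hσ : 0 < σ) (hC : 1 ≤ C * β)
    (x : ℕ → ℝ) (hx : ∀ k, 0 ≤ x k)
    (hrec : ∀ k : ℕ, x (k + 1) ≤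
      (C * (N / (N - p)) ^ k * β) ^ (σ / ((N / (N - p)) ^ k * β)) *
        max (x k) (x k ^ (1 - p / ((N / (N - p)) ^ k * β)))) :
    ∃ C' > 0, ∃ θ0 ∈ Set.Ioc (0 : ℝ) 1, ∀ k : ℕ, x k ≤ C' * max (x 0 ^ θ0) (x 0) := by
  have hN0 : 0 < N := by linarith
  have hNp : 0 < N - p := by linarith
  have hβ0 : 0 < β := by linarith
  have hp0 : 0 < p := by linarith
  set χ : ℝ := N / (N - p) with hχdef
  have hχ1 : 1 < χ := (one_lt_div hNp).2 (by linarith)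
  have hχ0 : 0 < χ := by linarith
  have hC0 : 0 < C := by nlinarith
  set q : ℝ := (N - p) / N with hqdef
  have hq0 : 0 < q := div_pos hNp hN0
  have hq1 : q < 1 := (div_lt_one hN0).2 (by linarith)
  have hχq : χ * q = 1 := by rw [hχdef, hqdef]; field_simp
  have hqinv : ∀ k : ℕ, (χ ^ k)⁻¹ = q ^ k := by
    intro k
    have h : χ ^ k * q ^ k = 1 := by rw [← mul_pow, hχq, one_pow]
    exact inv_eq_of_mul_eq_one_right h
  have hχk1 : ∀ k : ℕ, 1 ≤ χ ^ k := fun k => one_le_pow₀ hχ1.le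
  have hβk : ∀ k : ℕ, 0 < χ ^ k * β := fun k => mul_pos (pow_pos hχ0 k) hβ0
  set m : ℝ := p / β with hmdef
  have hm0 : 0 < m := div_pos hp0 hβ0
  have hm1 : m < 1 := (div_lt_one hβ0).2 hβ
  set t : ℕ → ℝ := fun k => p / (χ ^ k * β) with htdef
  have htval : ∀ k, t k = m * q ^ k := by
    intro k
    rw [htdef, hmdef]
    simp only [← hqinv k]
    rw [← div_eq_mul_inv, div_div, mul_comm β (χ ^ k)]
  have ht_pos : ∀ k, 0 < t k := fun k => div_pos hp0 (hβk k)
  have ht_le : ∀ k, t k ≤ m := by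
    intro k
    rw [htval k]
    nlinarith [pow_le_one₀ hq0.le hq1.le (n := k), pow_pos hq0 k]
  have ht_lt1 : ∀ k, t k < 1 := fun k => lt_of_le_of_lt (ht_le k) hm1
  set f : ℕ → ℝ := fun k => Real.log (C * χ ^ k * β) * (σ / (χ ^ k * β)) with hfdef
  have hCχβ : ∀ k, 1 ≤ C * χ ^ k * β := by
    intro k
    nlinarith [hχk1 k, mul_pos hC0 hβ0]
  have hf0 : ∀ k, 0 ≤ f k :=
    fun k => mul_nonneg (Real.log_nonneg (hCχβ k)) (div_nonneg hσ.le (hβk k).le)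
  have hA : ∀ k, (C * χ ^ k * β) ^ (σ / (χ ^ k * β)) = Real.exp (f k) := by
    intro k
    rw [Real.rpow_def_of_pos (by linarith [hCχβ k])]
  have hfval : ∀ k, f k = (Real.log (C * β) * (σ / β)) * q ^ k
      + (Real.log χ * (σ / β)) * ((k : ℝ) * q ^ k) := by
    intro k
    have h1 : Real.log (C * χ ^ k * β) = Real.log (C * β) + (k : ℝ) * Real.log χ := by
      have he : C * χ ^ k * β = (C * β) * χ ^ k := by ring
      rw [he, Real.log_mul (by nlinarith : C * β ≠ 0) (pow_ne_zero _ hχ0.ne'),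
        Real.log_pow]
    have h2 : σ / (χ ^ k * β) = (σ / β) * q ^ k := by
      rw [← hqinv k, ← div_eq_mul_inv, div_div, mul_comm β (χ ^ k)]
    rw [hfdef]
    simp only
    rw [h1, h2]
    ring
  have hsum : Summable f := by
    have s1 : Summable (fun k : ℕ => q ^ k) := summable_geometric_of_lt_one hq0.le hq1
    have s2 : Summable (fun k : ℕ => (k : ℝ) * q ^ k) := by
      have := summable_pow_mul_geometric_of_norm_lt_one (R := ℝ) 1
        (r := q) (by rw [Real.norm_eq_abs, abs_of_pos hq0]; exact hq1)
      simpa using this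
    exact Summable.congr ((s1.mul_left _).add (s2.mul_left _)) (fun k => (hfval k).symm)
  have hBle : ∀ k, ∑ i ∈ Finset.range k, f i ≤ ∑' i, f i :=
    fun k => Summable.sum_le_tsum _ (fun i _ => hf0 i) hsum
  set θ : ℕ → ℝ := fun k => ∏ i ∈ Finset.range k, (1 - t i) with hθdef
  have hθ_pos : ∀ k, 0 < θ k :=
    fun k => Finset.prod_pos (fun i _ => by linarith [ht_lt1 i])
  have hθ_le1 : ∀ k, θ k ≤ 1 :=
    fun k => Finset.prod_le_one (fun i _ => by linarith [ht_lt1 i])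
      (fun i _ => by linarith [ht_pos i])
  set θ0 : ℝ := Real.exp (-(m * (1 - q)⁻¹ / (1 - m))) with hθ0def
  have hθ_ge : ∀ k, θ0 ≤ θ k := by
    intro k
    have hsumt : ∑ i ∈ Finset.range k, t i ≤ m * (1 - q)⁻¹ := by
      have h1 : ∑ i ∈ Finset.range k, t i = m * ∑ i ∈ Finset.range k, q ^ i := by
        rw [Finset.mul_sum]
        exact Finset.sum_congr rfl (fun i _ => htval i)
      have h2 : ∑ i ∈ Finset.range k, q ^ i ≤ (1 - q)⁻¹ := by
        have := Summable.sum_le_tsum (Finset.range k) (fun i _ => (pow_pos hq0 i).le)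
          (summable_geometric_of_lt_one hq0.le hq1)
        rwa [tsum_geometric_of_lt_one hq0.le hq1] at this
      nlinarith
    have hstep1 : Real.exp (∑ i ∈ Finset.range k, -(t i / (1 - m))) ≤ θ k := by
      rw [Real.exp_sum]
      exact Finset.prod_le_prod (fun i _ => (Real.exp_pos _).le)
        (fun i _ => exp_le_one_sub (t i) m (ht_pos i).le (ht_le i) hm1)
    refine le_trans ?_ hstep1
    apply Real.exp_le_exp.2
    have h1m : 0 < 1 - m := by linarith
    have : ∑ i ∈ Finset.range k, -(t i / (1 - m))
        = -((∑ i ∈ Finset.range k, t i) / (1 - m)) := by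
      simp only [← neg_div]
      rw [← Finset.sum_div, Finset.sum_neg_distrib]
    rw [this]
    apply neg_le_neg
    exact (div_le_div_iff_of_pos_right h1m).2 hsumt
  have hθ0_pos : 0 < θ0 := Real.exp_pos _
  have hθ0_le1 : θ0 ≤ 1 := by
    rw [hθ0def]
    have h1m : 0 < 1 - m := by linarith
    have h1q : 0 < 1 - q := by linarith
    have harg : 0 ≤ m * (1 - q)⁻¹ / (1 - m) := by positivity
    calc Real.exp (-(m * (1 - q)⁻¹ / (1 - m))) ≤ Real.exp 0 :=
          Real.exp_le_exp.2 (by linarith)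
      _ = 1 := Real.exp_zero
  have key : ∀ k, x k ≤ Real.exp (∑ i ∈ Finset.range k, f i) * max (x 0 ^ θ k) (x 0) := by
    intro k
    induction k with
    | zero =>
      simp only [Finset.range_zero, Finset.sum_empty, Real.exp_zero, one_mul, hθdef,
        Finset.prod_empty]
      rw [Real.rpow_one, max_self]
    | succ k ih =>
      set B := Real.exp (∑ i ∈ Finset.range k, f i) with hBdef
      have hB1 : 1 ≤ B := Real.one_le_exp (Finset.sum_nonneg (fun i _ => hf0 i))
      have hB0 : 0 < B := Real.exp_pos _
      have hθsucc : θ (k + 1) = θ k * (1 - t k) := Finset.prod_range_succ _ _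
      have hθmono : θ (k + 1) ≤ θ k := by
        rw [hθsucc]
        exact mul_le_of_le_one_right (hθ_pos k).le (by linarith [ht_pos k])
      have hM0 : 0 ≤ max (x 0 ^ θ k) (x 0) := le_trans (hx 0) (le_max_right _ _)
      have hMle : max (x 0 ^ θ k) (x 0) ≤ max (x 0 ^ θ (k + 1)) (x 0) := by
        apply max_le _ (le_max_right _ _)
        exact rpow_le_max (x 0) (θ (k + 1)) (θ k) (hx 0) (hθ_pos (k + 1)) hθmono (hθ_le1 k)
      have h1 : x k ≤ B * max (x 0 ^ θ (k + 1)) (x 0) :=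
        ih.trans (mul_le_mul_of_nonneg_left hMle hB0.le)
      have hr0 : (0:ℝ) ≤ 1 - t k := by linarith [ht_lt1 k]
      have hr1 : 1 - t k ≤ 1 := by linarith [ht_pos k]
      have h2 : x k ^ (1 - t k) ≤ B * max (x 0 ^ θ (k + 1)) (x 0) := by
        have c1 : x k ^ (1 - t k) ≤ (B * max (x 0 ^ θ k) (x 0)) ^ (1 - t k) :=
          Real.rpow_le_rpow (hx k) ih hr0
        have c2 : (B * max (x 0 ^ θ k) (x 0)) ^ (1 - t k)
            = B ^ (1 - t k) * (max (x 0 ^ θ k) (x 0)) ^ (1 - t k) :=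
          Real.mul_rpow hB0.le hM0
        have c3 : B ^ (1 - t k) ≤ B := by
          have := Real.rpow_le_rpow_of_exponent_le hB1 hr1
          rwa [Real.rpow_one] at this
        have c4 : (max (x 0 ^ θ k) (x 0)) ^ (1 - t k) ≤ max (x 0 ^ θ (k + 1)) (x 0) := by
          rcases max_choice (x 0 ^ θ k) (x 0) with h | h
          · rw [h, ← Real.rpow_mul (hx 0), ← hθsucc]
            exact le_max_left _ _
          · rw [h]
            apply rpow_le_max (x 0) (θ (k + 1)) (1 - t k) (hx 0) (hθ_pos (k + 1)) _ hr1
            rw [hθsucc]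
            exact mul_le_of_le_one_left hr0 (hθ_le1 k)
        calc x k ^ (1 - t k) ≤ B ^ (1 - t k) * (max (x 0 ^ θ k) (x 0)) ^ (1 - t k) := by
              rw [← c2]; exact c1
          _ ≤ B * max (x 0 ^ θ (k + 1)) (x 0) :=
              mul_le_mul c3 c4 (Real.rpow_nonneg hM0 _) hB0.le
      have hmax : max (x k) (x k ^ (1 - t k)) ≤ B * max (x 0 ^ θ (k + 1)) (x 0) :=
        max_le h1 h2
      calc x (k + 1) ≤ (C * χ ^ k * β) ^ (σ / (χ ^ k * β)) *
              max (x k) (x k ^ (1 - p / (χ ^ k * β))) := hrec k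
        _ = Real.exp (f k) * max (x k) (x k ^ (1 - t k)) := by rw [hA k]
        _ ≤ Real.exp (f k) * (B * max (x 0 ^ θ (k + 1)) (x 0)) :=
            mul_le_mul_of_nonneg_left hmax (Real.exp_pos _).le
        _ = Real.exp (∑ i ∈ Finset.range (k + 1), f i) * max (x 0 ^ θ (k + 1)) (x 0) := by
            rw [Finset.sum_range_succ, Real.exp_add, hBdef]
            ring
  refine ⟨Real.exp (∑' i, f i), Real.exp_pos _, θ0, ⟨hθ0_pos, hθ0_le1⟩, fun k => ?_⟩
  refine (key k).trans ?_
  apply mul_le_mul (Real.exp_le_exp.2 (hBle k)) _ (le_trans (hx 0) (le_max_right _ _))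
    (Real.exp_pos _).le
  apply max_le _ (le_max_right _ _)
  exact rpow_le_max (x 0) θ0 (θ k) (hx 0) hθ0_pos (hθ_ge k) (hθ_le1 k)
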